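/- arXiv:1806.10262 — 2 statements merged into one kernel-verified Lean document; each statement's English description precedes it below -/
import Mathlib

section
/- For every real number β with 1 < β < 2 and every integer N ≥ 2, the partial sum satisfies ∑_{k=0}^{N} ω_k^{(β)} < 0. -/
/-!
With `P_n = ∏_{j=1}^{n} (1 - β/j)` one has `g_{n+1} = P_{n+1} - P_n`, so the partial sums of `g`
telescope to `P_n` and `∑_{k ≤ n+1} ω_k = (β/2) P_{n+1} + ((2-β)/2) P_n = (1 - β²/(2(n+1))) P_n`.
For `1 < β < 2` and `n ≥ 1`, `P_n` has exactly one negative factor, `1 - β`, and the prefactor is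
positive because `β² < 4 ≤ 2(n+1)`.
-/

open scoped Matrix

/-- The coefficients `g_k^{(β)}`. -/
noncomputable def gcoef (β : ℝ) : ℕ → ℝ
  | 0 => 1
  | k + 1 => (1 - (β + 1) / ((k : ℝ) + 1)) * gcoef β k

/-- The WSGD coefficients `ω_k^{(β)}`. -/
noncomputable def w (β : ℝ) : ℕ → ℝ
  | 0 => β / 2 * gcoef β 0
  | k + 1 => β / 2 * gcoef β (k + 1) + (2 - β) / 2 * gcoef β k

open Finset

noncomputable def gprod (β : ℝ) (n : ℕ) : ℝ := ∏ j ∈ range n, (1 - β / (j + 1))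

lemma gprod_succ (β : ℝ) (n : ℕ) : gprod β (n + 1) = (1 - β / (n + 1)) * gprod β n := by
  rw [gprod, prod_range_succ, mul_comm, gprod]

lemma gcoef_succ (β : ℝ) (n : ℕ) : gcoef β (n + 1) = -(β / (n + 1)) * gprod β n := by
  induction n with
  | zero => simp [gcoef, gprod]
  | succ n ih =>
    rw [gcoef, ih, gprod_succ]
    push_cast
    field_simp
    ring

lemma sum_range_gcoef (β : ℝ) (n : ℕ) : ∑ k ∈ range (n + 1), gcoef β k = gprod β n := by
  induction n with
  | zero => simp [gcoef, gprod]
  | succ n ih =>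
    rw [sum_range_succ, ih, gcoef_succ, gprod_succ]
    ring

lemma sum_range_w (β : ℝ) (n : ℕ) :
    ∑ k ∈ range (n + 2), w β k = β / 2 * gprod β (n + 1) + (2 - β) / 2 * gprod β n := by
  rw [← sum_range_gcoef, ← sum_range_gcoef, sum_range_succ' (w β), sum_range_succ' (gcoef β)]
  simp only [w, sum_add_distrib, ← mul_sum]
  ring

lemma sum_range_w_eq_mul_gprod (β : ℝ) (n : ℕ) :
    ∑ k ∈ range (n + 2), w β k = (1 - β ^ 2 / (2 * (n + 1))) * gprod β n := by
  rw [sum_range_w, gprod_succ]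
  field_simp
  ring

lemma gprod_succ_neg {β : ℝ} (hβ1 : 1 < β) (hβ2 : β < 2) (n : ℕ) : gprod β (n + 1) < 0 := by
  rw [gprod, prod_range_succ']
  refine mul_neg_of_pos_of_neg (prod_pos fun j _ ↦ ?_) (by norm_num; linarith)
  rw [sub_pos, div_lt_one (by positivity)]
  push_cast
  linarith [(j.cast_nonneg : (0 : ℝ) ≤ j)]

theorem wsgd_partial_sum_neg (β : ℝ) (hβ1 : 1 < β) (hβ2 : β < 2)
    (N : ℕ) (hN : 2 ≤ N) :
    ∑ k ∈ Finset.range (N + 1), w β k < 0 := by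
  obtain ⟨n, rfl⟩ : ∃ n, N = n + 2 := ⟨N - 2, by omega⟩
  rw [sum_range_w_eq_mul_gprod]
  refine mul_neg_of_pos_of_neg ?_ (gprod_succ_neg hβ1 hβ2 n)
  rw [sub_pos, div_lt_one (by positivity)]
  push_cast
  nlinarith [(n.cast_nonneg : (0 : ℝ) ≤ n)]
end

section
/- (Lemma 3.4) Fix reals β ∈ (1,2), α ∈ (0,1), e_1, e_2 > 0 and set σ = 1 − α/2. For every ε > 0 there exists a positive integer N′ such that for every integer N with N > N′ + 1 there exist real (N−1)×(N−1) matrices Ũ and Ṽ with A_0 − P_sk = Ũ + Ṽ, rank(Ũ) ≤ 2·N′, and ‖Ṽ‖_2 ≤ ε. (Note that A_0 − P_sk = σ·(sk(K_N) − K_N) does not depend on h or τ.) -/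
open scoped Matrix

/-- The `(N−1) × (N−1)` lower Hessenberg Toeplitz matrix `G_β`
(1-based entry `(i,j)` equals `ω_{i−j+1}` when `i − j + 1 ≥ 0`, else `0`). -/
noncomputable def Gmat (β : ℝ) (N : ℕ) : Matrix (Fin (N - 1)) (Fin (N - 1)) ℝ :=
  Matrix.of fun i j => if (j : ℕ) ≤ (i : ℕ) + 1 then w β ((i : ℕ) + 1 - (j : ℕ)) else 0

/-- `K_N = e₁·G_β + e₂·G_βᵀ`. -/
noncomputable def Kmat (β e1 e2 : ℝ) (N : ℕ) : Matrix (Fin (N - 1)) (Fin (N - 1)) ℝ :=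
  e1 • Gmat β N + e2 • (Gmat β N)ᵀ
/-- `c_0^{(α,σ)} = τ^{−α}·σ^{1−α}/Γ(2−α)` with `σ = 1 − α/2`. -/
noncomputable def c0 (α τ : ℝ) : ℝ :=
  τ ^ (-α) * (1 - α / 2) ^ (1 - α) / Real.Gamma (2 - α)

/-- `A_0 = h^β·c_0^{(α,σ)}·I − σ·K_N` with `σ = 1 − α/2`. -/
noncomputable def A0mat (β α h τ e1 e2 : ℝ) (N : ℕ) :
    Matrix (Fin (N - 1)) (Fin (N - 1)) ℝ :=
  (h ^ β * c0 α τ) • (1 : Matrix (Fin (N - 1)) (Fin (N - 1)) ℝ) -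
    (1 - α / 2) • Kmat β e1 e2 N
/-- The skew-circulant matrix `sk(G_β)` with first column
`(ω_1, ω_2, …, ω_{N−2}, −ω_0)ᵀ`. -/
noncomputable def skG (β : ℝ) (N : ℕ) : Matrix (Fin (N - 1)) (Fin (N - 1)) ℝ :=
  Matrix.of fun i j =>
    if (j : ℕ) ≤ (i : ℕ) then
      (if (i : ℕ) - (j : ℕ) = N - 2 then -(w β 0) else w β ((i : ℕ) - (j : ℕ) + 1))
    else
      -(if N - 1 - ((j : ℕ) - (i : ℕ)) = N - 2 then -(w β 0)
        else w β (N - 1 - ((j : ℕ) - (i : ℕ)) + 1))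

/-- `sk(K_N) = e₁·sk(G_β) + e₂·sk(G_β)ᵀ`. -/
noncomputable def skK (β e1 e2 : ℝ) (N : ℕ) : Matrix (Fin (N - 1)) (Fin (N - 1)) ℝ :=
  e1 • skG β N + e2 • (skG β N)ᵀ

/-- The skew-circulant preconditioner `P_sk = h^β·c_0^{(α,σ)}·I − σ·sk(K_N)`. -/
noncomputable def Psk (β α h τ e1 e2 : ℝ) (N : ℕ) :
    Matrix (Fin (N - 1)) (Fin (N - 1)) ℝ :=
  (h ^ β * c0 α τ) • (1 : Matrix (Fin (N - 1)) (Fin (N - 1)) ℝ) -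
    (1 - α / 2) • skK β e1 e2 N
/-- The matrix operator norm induced by the Euclidean vector norm. -/
noncomputable def l2OpNorm {n : ℕ} (M : Matrix (Fin n) (Fin n) ℝ) : ℝ :=
  ‖Matrix.toEuclideanCLM (𝕜 := ℝ) M‖

/-!
Write `D = sk(G_β) − G_β`, so that `A₀ − P_sk = σ (e₁ D + e₂ Dᵀ)`. Apart from its last row, `D`
is the upper Toeplitz matrix with entries `−ω_{N+i−j}` for `j ≥ i + 2`, and `∑ |ω_k| < ∞` because
`g_k ≥ 0` for `k ≥ 2` while `β ∑_{k<n} g_k = −n g_n` keeps the partial sums bounded.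
Let `P` be the coordinate projection onto the first `N − 1 − N′` indices and `X = A₀ − P_sk`.
Then `V = P X P` only involves coefficients `ω_m` with `m > N′`, so its row and column sums are
bounded by a tail of `∑ |ω_k|` and the Schur test makes `‖V‖₂` small, while
`U = X − P X P = (1 − P) X + P X (1 − P)` has rank at most `2 rank (1 − P) = 2 N′`.
-/

open Finset
open scoped Matrix.Norms.L2Operator

lemma gcoef_nonneg {β : ℝ} (hβ1 : 1 ≤ β) (hβ2 : β ≤ 2) : ∀ k, 0 ≤ gcoef β (k + 2)
  | 0 => by norm_num [gcoef]; nlinarith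
  | k + 1 => by
    refine mul_nonneg ?_ (gcoef_nonneg hβ1 hβ2 k)
    rw [sub_nonneg, div_le_one (by positivity)]
    push_cast
    linarith [(k.cast_nonneg : (0 : ℝ) ≤ k)]

lemma mul_sum_range_gcoef (β : ℝ) (n : ℕ) :
    β * ∑ k ∈ range n, gcoef β k = -n * gcoef β n := by
  induction n with
  | zero => simp
  | succ n ih =>
    rw [sum_range_succ, mul_add, ih, gcoef]
    field_simp
    push_cast
    ring

lemma summable_gcoef {β : ℝ} (hβ1 : 1 ≤ β) (hβ2 : β ≤ 2) : Summable (gcoef β) := by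
  refine (summable_nat_add_iff 2).mp
    (summable_of_sum_range_le (c := β - 1) (gcoef_nonneg hβ1 hβ2) fun n => ?_)
  have h := mul_sum_range_gcoef β (n + 2)
  have hg1 : gcoef β 1 = -β := by norm_num [gcoef]
  rw [sum_range_succ', sum_range_succ', zero_add, hg1, show gcoef β 0 = 1 from rfl] at h
  push_cast at h
  nlinarith [mul_nonneg (by positivity : (0 : ℝ) ≤ n + 2) (gcoef_nonneg hβ1 hβ2 n)]

lemma summable_w {β : ℝ} (hβ1 : 1 ≤ β) (hβ2 : β ≤ 2) : Summable (w β) := by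
  have hg := summable_gcoef hβ1 hβ2
  exact (summable_nat_add_iff 1).mp
    ((((summable_nat_add_iff 1).mpr hg).mul_left (β / 2)).add (hg.mul_left ((2 - β) / 2)))

lemma Summable.exists_sum_tail_lt {f : ℕ → ℝ} (hf : Summable f) {δ : ℝ} (hδ : 0 < δ) :
    ∃ K, ∀ s : Finset ℕ, (∀ m ∈ s, K ≤ m) → ∑ m ∈ s, f m < δ := by
  obtain ⟨K, hK⟩ := hf.nat_tsum_vanishing (Iio_mem_nhds hδ)
  exact ⟨K, fun s hs => by simpa [Finset.tsum_subtype, Finset.sum_attach] using hK s hs⟩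

namespace Matrix

theorem rank_add_le {K m n : Type*} [Field K] [Fintype m] [Fintype n] (A B : Matrix m n K) :
    (A + B).rank ≤ A.rank + B.rank := by
  have hle : LinearMap.range (A + B).mulVecLin ≤
      LinearMap.range A.mulVecLin ⊔ LinearMap.range B.mulVecLin := by
    rintro x ⟨v, rfl⟩
    exact Submodule.mem_sup.mpr ⟨A.mulVecLin v, ⟨v, rfl⟩, B.mulVecLin v, ⟨v, rfl⟩,
      by simp [Matrix.mulVecLin_add]⟩
  exact (Submodule.finrank_mono hle).trans (Submodule.finrank_add_le_finrank_add_finrank _ _)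

theorem rank_sub_mul_mul_le {K n : Type*} [Field K] [Fintype n] [DecidableEq n]
    (X P : Matrix n n K) : (X - P * X * P).rank ≤ 2 * (1 - P).rank := by
  have h : X - P * X * P = (1 - P) * X + P * X * (1 - P) := by noncomm_ring
  calc (X - P * X * P).rank ≤ ((1 - P) * X).rank + (P * X * (1 - P)).rank :=
        h ▸ rank_add_le _ _
    _ ≤ (1 - P).rank + (1 - P).rank := add_le_add (rank_mul_le_left _ _) (rank_mul_le_right _ _)
    _ = 2 * (1 - P).rank := (two_mul _).symm

lemma mul_smul_add_transpose_mul {R n : Type*} [CommRing R] [Fintype n]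
    {P : Matrix n n R} (hP : Pᵀ = P) (M : Matrix n n R) (s a b : R) :
    P * (s • (a • M + b • Mᵀ)) * P = s • (a • (P * M * P) + b • (P * M * P)ᵀ) := by
  simp only [transpose_mul, hP, Matrix.mul_add, Matrix.add_mul, Matrix.mul_smul,
    Matrix.smul_mul, Matrix.mul_assoc]

variable {𝕜 m n : Type*} [RCLike 𝕜] [Fintype m] [Fintype n] [DecidableEq n]

theorem l2_opNorm_le_sqrt_of_sum_norm_le (A : Matrix m n 𝕜) {r c : ℝ} (hr₀ : 0 ≤ r)
    (hr : ∀ i, ∑ j, ‖A i j‖ ≤ r) (hc : ∀ j, ∑ i, ‖A i j‖ ≤ c) : ‖A‖ ≤ √(r * c) := by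
  rw [l2_opNorm_def]
  refine ContinuousLinearMap.opNorm_le_bound _ (Real.sqrt_nonneg _) fun x => ?_
  have hrow : ∀ i, ‖(A *ᵥ x) i‖ ^ 2 ≤ r * ∑ j, ‖A i j‖ * ‖x j‖ ^ 2 := fun i => calc
    ‖(A *ᵥ x) i‖ ^ 2 ≤ (∑ j, ‖A i j‖ * ‖x j‖) ^ 2 := by
      gcongr
      exact (norm_sum_le _ _).trans_eq (by simp [norm_mul])
    _ ≤ (∑ j, ‖A i j‖) * ∑ j, ‖A i j‖ * ‖x j‖ ^ 2 :=
      sum_sq_le_sum_mul_sum_of_sq_le_mul _ (fun _ _ => norm_nonneg _)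
        (fun _ _ => by positivity) (fun _ _ => le_of_eq (by ring))
    _ ≤ r * ∑ j, ‖A i j‖ * ‖x j‖ ^ 2 := by gcongr; exact hr i
  have key : ‖toEuclideanLin A x‖ ^ 2 ≤ (r * c) * ‖x‖ ^ 2 := calc
    ‖toEuclideanLin A x‖ ^ 2 = ∑ i, ‖(A *ᵥ x) i‖ ^ 2 := by simp [EuclideanSpace.norm_sq_eq]
    _ ≤ ∑ i, r * ∑ j, ‖A i j‖ * ‖x j‖ ^ 2 := sum_le_sum fun i _ => hrow i
    _ = r * ∑ j, (∑ i, ‖A i j‖) * ‖x j‖ ^ 2 := by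
      simp only [← mul_sum, sum_mul]
      rw [sum_comm]
    _ ≤ r * ∑ j, c * ‖x j‖ ^ 2 := by gcongr with j; exact hc j
    _ = (r * c) * ‖x‖ ^ 2 := by simp [EuclideanSpace.norm_sq_eq, mul_sum, mul_assoc]
  calc _ ≤ √((r * c) * ‖x‖ ^ 2) := Real.le_sqrt_of_sq_le key
    _ = √(r * c) * ‖x‖ := by rw [Real.sqrt_mul' _ (by positivity), Real.sqrt_sq (norm_nonneg _)]

theorem l2_opNorm_le_of_norm_le_comp {ι : Type*} (A : Matrix m n 𝕜) (f : m → n → ι)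
    (hf_row : ∀ i, Function.Injective (f i)) (hf_col : ∀ j, Function.Injective (f · j))
    {a : ι → ℝ} {δ : ℝ} (ha : ∀ s : Finset ι, ∑ k ∈ s, a k ≤ δ)
    (hA : ∀ i j, ‖A i j‖ ≤ a (f i j)) : ‖A‖ ≤ δ := by
  classical
  have hδ : 0 ≤ δ := by simpa using ha ∅
  have hrow : ∀ i, ∑ j, ‖A i j‖ ≤ δ := fun i => calc
    ∑ j, ‖A i j‖ ≤ ∑ j, a (f i j) := sum_le_sum fun j _ => hA i j
    _ = ∑ k ∈ univ.image (f i), a k := (sum_image fun _ _ _ _ h => hf_row i h).symm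
    _ ≤ δ := ha _
  have hcol : ∀ j, ∑ i, ‖A i j‖ ≤ δ := fun j => calc
    ∑ i, ‖A i j‖ ≤ ∑ i, a (f i j) := sum_le_sum fun i _ => hA i j
    _ = ∑ k ∈ univ.image (f · j), a k := (sum_image fun _ _ _ _ h => hf_col j h).symm
    _ ≤ δ := ha _
  simpa [Real.sqrt_mul_self hδ] using l2_opNorm_le_sqrt_of_sum_norm_le A hδ hrow hcol

theorem l2_opNorm_smul_add_transpose_le (M : Matrix n n ℝ) (s a b : ℝ) :
    ‖s • (a • M + b • Mᵀ)‖ ≤ |s| * (|a| + |b|) * ‖M‖ := by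
  have hT : ‖Mᵀ‖ = ‖M‖ := by
    simpa [conjTranspose_eq_transpose_of_trivial] using l2_opNorm_conjTranspose M
  calc ‖s • (a • M + b • Mᵀ)‖ ≤ |s| * (|a| * ‖M‖ + |b| * ‖Mᵀ‖) := by
        rw [norm_smul, Real.norm_eq_abs]
        gcongr
        refine (norm_add_le _ _).trans ?_
        simp only [norm_smul, Real.norm_eq_abs, le_refl]
    _ = |s| * (|a| + |b|) * ‖M‖ := by rw [hT]; ring

end Matrix

def truncProj (n k : ℕ) : Matrix (Fin n) (Fin n) ℝ :=
  Matrix.diagonal fun i => if (i : ℕ) < k then 1 else 0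

lemma transpose_truncProj (n k : ℕ) : (truncProj n k)ᵀ = truncProj n k :=
  Matrix.diagonal_transpose _

lemma rank_one_sub_truncProj (n k : ℕ) : (1 - truncProj n k).rank = n - k := by
  have h : 1 - truncProj n k = Matrix.diagonal fun i : Fin n => if (i : ℕ) < k then 0 else 1 := by
    rw [truncProj, ← Matrix.diagonal_one, Matrix.diagonal_sub]
    congr! 2 with i
    split_ifs <;> norm_num
  rw [h, Matrix.rank_diagonal, Fintype.card_subtype,
    filter_congr (q := fun i : Fin n => ¬ (i : ℕ) < k) fun i _ => by split_ifs <;> simp_all]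
  have := card_filter_add_card_filter_not (s := univ) (fun i : Fin n => (i : ℕ) < k)
  simp only [card_univ, Fintype.card_fin, Fin.card_filter_val_lt] at this
  omega

lemma truncProj_mul_mul_apply {n k : ℕ} (M : Matrix (Fin n) (Fin n) ℝ) (i j : Fin n) :
    (truncProj n k * M * truncProj n k) i j =
      if (i : ℕ) < k ∧ (j : ℕ) < k then M i j else 0 := by
  by_cases hi : (i : ℕ) < k <;> by_cases hj : (j : ℕ) < k <;>
    simp [truncProj, Matrix.diagonal_mul, Matrix.mul_diagonal, hi, hj]

lemma skG_sub_Gmat_apply (β : ℝ) {N : ℕ} (i j : Fin (N - 1)) (hi : (i : ℕ) + 2 < N) :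
    (skG β N - Gmat β N) i j = if (i : ℕ) + 2 ≤ j then -w β (N + i - j) else 0 := by
  have hj : (j : ℕ) < N - 1 := j.isLt
  simp only [Matrix.sub_apply, skG, Gmat, Matrix.of_apply]
  by_cases h2 : (i : ℕ) + 2 ≤ j
  · rw [if_pos h2, if_neg (by omega), if_neg (by omega), if_neg (by omega),
      show N - 1 - ((j : ℕ) - i) + 1 = N + i - j by omega]
    ring
  · rw [if_neg h2]
    by_cases hji : (j : ℕ) ≤ i
    · rw [if_pos hji, if_neg (by omega), if_pos (by omega),
        show (i : ℕ) - j + 1 = i + 1 - j by omega, sub_self]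
    · rw [if_neg hji, if_pos (by omega), if_pos (by omega),
        show (i : ℕ) + 1 - j = 0 by omega, neg_neg, sub_self]

lemma norm_truncProj_mul_skG_sub_Gmat_mul_le {β δ : ℝ} {K N : ℕ}
    (hK : ∀ s : Finset ℕ, (∀ m ∈ s, K ≤ m) → ∑ m ∈ s, |w β m| ≤ δ) :
    ‖truncProj (N - 1) (N - 2 - K) * (skG β N - Gmat β N) * truncProj (N - 1) (N - 2 - K)‖
      ≤ δ := by
  classical
  refine Matrix.l2_opNorm_le_of_norm_le_comp _ (fun i j : Fin (N - 1) => N + i - j)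
    (fun i j₁ j₂ h => Fin.ext (by have := j₁.isLt; have := j₂.isLt; simp only at h; omega))
    (fun j i₁ i₂ h => Fin.ext (by have := j.isLt; simp only at h; omega))
    (a := fun m => if K ≤ m then |w β m| else 0) (fun s => ?_) (fun i j => ?_)
  · rw [← sum_filter]
    exact hK _ fun m hm => (mem_filter.mp hm).2
  · rw [truncProj_mul_mul_apply]
    split_ifs with hij hKle
    · rw [skG_sub_Gmat_apply β i j (by omega)]
      split_ifs <;> simp
    · omega
    · simp
    · simp

lemma A0mat_sub_Psk (β α h τ e1 e2 : ℝ) (N : ℕ) :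
    A0mat β α h τ e1 e2 N - Psk β α h τ e1 e2 N =
      (1 - α / 2) • (e1 • (skG β N - Gmat β N) + e2 • (skG β N - Gmat β N)ᵀ) := by
  simp only [A0mat, Psk, Kmat, skK, Matrix.transpose_sub]
  module

theorem A0_sub_Psk_split_general (β α e1 e2 h τ : ℝ) (hβ1 : 1 < β) (hβ2 : β < 2) :
    ∀ ε > (0 : ℝ), ∃ N' : ℕ, 0 < N' ∧
      ∀ N : ℕ, N' + 1 < N →
        ∃ U V : Matrix (Fin (N - 1)) (Fin (N - 1)) ℝ,
          A0mat β α h τ e1 e2 N - Psk β α h τ e1 e2 N = U + V ∧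
          U.rank ≤ 2 * N' ∧ l2OpNorm V ≤ ε := by
  intro ε hε
  set C := |1 - α / 2| * (|e1| + |e2|)
  obtain ⟨K, hK⟩ :=
    (summable_w hβ1.le hβ2.le).abs.exists_sum_tail_lt (by positivity : 0 < ε / (C + 1))
  refine ⟨K + 1, K.succ_pos, fun N _ => ?_⟩
  set P := truncProj (N - 1) (N - 2 - K)
  set X := A0mat β α h τ e1 e2 N - Psk β α h τ e1 e2 N with hX
  refine ⟨X - P * X * P, P * X * P, (sub_add_cancel X _).symm, ?_, ?_⟩
  · calc (X - P * X * P).rank ≤ 2 * (1 - P).rank := Matrix.rank_sub_mul_mul_le X P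
      _ ≤ 2 * (K + 1) := by rw [rank_one_sub_truncProj]; omega
  · change ‖P * X * P‖ ≤ ε
    rw [hX, A0mat_sub_Psk, Matrix.mul_smul_add_transpose_mul (transpose_truncProj _ _)]
    calc _ ≤ C * ‖P * (skG β N - Gmat β N) * P‖ :=
          Matrix.l2_opNorm_smul_add_transpose_le _ _ _ _
      _ ≤ C * (ε / (C + 1)) := by
        gcongr
        exact norm_truncProj_mul_skG_sub_Gmat_mul_le fun s hs => (hK s hs).le
      _ ≤ ε := by
        rw [← mul_div_assoc, div_le_iff₀ (by positivity)]
        nlinarith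

theorem A0_sub_Psk_split (β α e1 e2 h τ : ℝ) (hβ1 : 1 < β) (hβ2 : β < 2)
    (hα0 : 0 < α) (hα1 : α < 1) (he1 : 0 < e1) (he2 : 0 < e2)
    (hh : 0 < h) (hτ : 0 < τ) :
    ∀ ε > (0 : ℝ), ∃ N' : ℕ, 0 < N' ∧
      ∀ N : ℕ, N' + 1 < N →
        ∃ U V : Matrix (Fin (N - 1)) (Fin (N - 1)) ℝ,
          A0mat β α h τ e1 e2 N - Psk β α h τ e1 e2 N = U + V ∧
          U.rank ≤ 2 * N' ∧ l2OpNorm V ≤ ε :=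
  A0_sub_Psk_split_general β α e1 e2 h τ hβ1 hβ2
end
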